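/- arXiv:1202.6551 — 2 statements merged into one kernel-verified Lean document; each statement's English description precedes it below -/
import Mathlib

section
/- For any finite simple graph G=(V,E) and any edge uv ∈ E, H_u H_v |G⟩ = Z_{N(u)∩N(v)} |G∧uv⟩, where G∧uv = G*u*v*u is the pivot of G on uv. -/
/-- Local complementation `G*u`. -/
def localComp {V : Type*} (G : SimpleGraph V) (u : V) : SimpleGraph V where
  Adj x y := x ≠ y ∧ Xor' (G.Adj x y) (G.Adj u x ∧ G.Adj u y)
  symm := by
    constructor
    rintro x y ⟨hxy, h⟩
    refine ⟨hxy.symm, ?_⟩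
    rw [G.adj_comm y x, and_comm]
    exact h
  loopless := by constructor; rintro x ⟨h, -⟩; exact h rfl

/-- Pivoting (edge local complementation): `G∧uv = G*u*v*u`. -/
def pivot {V : Type*} (G : SimpleGraph V) (u v : V) : SimpleGraph V :=
  localComp (localComp (localComp G u) v) u

instance {V : Type*} [DecidableEq V] (G : SimpleGraph V) [DecidableRel G.Adj] (u : V) :
    DecidableRel (localComp G u).Adj :=
  fun x y => inferInstanceAs (Decidable (x ≠ y ∧ Xor (G.Adj x y) (G.Adj u x ∧ G.Adj u y)))

instance {V : Type*} [DecidableEq V] (G : SimpleGraph V) [DecidableRel G.Adj] (u v : V) :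
    DecidableRel (pivot G u v).Adj := by unfold pivot; infer_instance

noncomputable section

/-- The state space of qubits indexed by `V`: ℂ^{2^|V|}, given by amplitudes on the
computational basis states `|x⟩`, `x : V → Bool`. -/
abbrev QState (V : Type*) := (V → Bool) → ℂ

variable {V : Type*} [Fintype V] [DecidableEq V]

/-- The Pauli operator `Z_S = ∏_{u∈S} Z_u`: `Z_S |x⟩ = (-1)^{|S ∩ supp x|} |x⟩`. -/
def Zop (S : Finset V) (ψ : QState V) : QState V :=
  fun x => (-1 : ℂ) ^ (S.filter (fun u => x u = true)).card * ψ x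

/-- The Pauli operator `X_u`: flips qubit `u`. -/
def Xop (u : V) (ψ : QState V) : QState V :=
  fun x => ψ (Function.update x u (!x u))

/-- `q(x)`: the number of edges of `G` with both endpoints in the support of `x`. -/
def qVal (G : SimpleGraph V) [DecidableRel G.Adj] (x : V → Bool) : ℕ :=
  (G.edgeFinset.filter (fun e => ∀ v ∈ e, x v = true)).card

/-- The graph state `|G⟩ = 2^{-n/2} ∑_x (-1)^{q(x)} |x⟩`. -/
def graphState (G : SimpleGraph V) [DecidableRel G.Adj] : QState V :=
  fun x => (-1 : ℂ) ^ qVal G x / (Real.sqrt (2 ^ Fintype.card V) : ℂ)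

/-- The signed graph state `|G;S⟩ = Z_S |G⟩`. -/
def sgState (G : SimpleGraph V) [DecidableRel G.Adj] (S : Finset V) : QState V :=
  Zop S (graphState G)

/-- The Hadamard gate `H_u` on qubit `u`. -/
def Hop (u : V) (ψ : QState V) : QState V :=
  fun x => ((Real.sqrt 2 : ℂ))⁻¹ *
    (ψ (Function.update x u false) + (if x u then -1 else 1) * ψ (Function.update x u true))

end

/-!
Write a basis state as `x = y[u ↦ a][v ↦ b]`, where `y` is the indicator of a set `S` avoiding
`u` and `v`. Adding a vertex `w ∉ S` to `S` raises the edge count `q` by `|N(w) ∩ S|`, so `|G⟩`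
carries the phase `(-1)^(cα + dβ + cd)` on the four states `y[u ↦ c][v ↦ d]`, with
`α = |N(u) ∩ S|` and `β = |N(v) ∩ S|`; the two Hadamards turn it into `(-1)^((a+α)(b+β))`.
The pivot exchanges the neighbourhoods of `u` and `v` away from `{u, v}` and toggles the adjacency
of `p, q ∉ {u, v}` by `[u~p][v~q] + [v~p][u~q]`. Adding the vertices of `S` one at a time then gives
`q_{G∧uv}(S) ≡ q_G(S) + αβ + |N(u) ∩ N(v) ∩ S| (mod 2)`, and the last term is the phase of
`Z_{N(u)∩N(v)}`.
-/

open Finset Function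

section Pivot

variable {V : Type*} {G : SimpleGraph V} {u v : V}

lemma localComp_adj (G : SimpleGraph V) (u x y : V) :
    (localComp G u).Adj x y ↔ x ≠ y ∧ Xor (G.Adj x y) (G.Adj u x ∧ G.Adj u y) := Iff.rfl

lemma pivot_adj_self (huv : G.Adj u v) : (pivot G u v).Adj u v := by
  simp [pivot, localComp_adj, G.adj_comm v u, huv, huv.ne, Xor]

lemma pivot_adj_left (huv : G.Adj u v) {p : V} (hpu : p ≠ u) (hpv : p ≠ v) :
    (pivot G u v).Adj u p ↔ G.Adj v p := by
  simp only [pivot, localComp_adj, G.adj_comm v u, Xor]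
  by_cases G.Adj u p <;> by_cases G.Adj v p <;> simp_all [hpu.symm, hpv.symm, huv.ne.symm]

lemma pivot_adj_right (huv : G.Adj u v) {p : V} (hpu : p ≠ u) (hpv : p ≠ v) :
    (pivot G u v).Adj v p ↔ G.Adj u p := by
  simp only [pivot, localComp_adj, G.adj_comm v u, Xor]
  by_cases G.Adj u p <;> by_cases G.Adj v p <;> simp_all [hpu.symm, hpv.symm, huv.ne, huv.ne.symm]

lemma pivot_adj (huv : G.Adj u v) {p q : V}
    (hpu : p ≠ u) (hpv : p ≠ v) (hqu : q ≠ u) (hqv : q ≠ v) :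
    (pivot G u v).Adj p q ↔
      p ≠ q ∧ Xor (G.Adj p q) (Xor (G.Adj u p ∧ G.Adj v q) (G.Adj v p ∧ G.Adj u q)) := by
  simp only [pivot, localComp_adj, G.adj_comm v u, Xor]
  by_cases p = q <;> by_cases G.Adj p q <;> by_cases G.Adj u p <;> by_cases G.Adj v p <;>
    by_cases G.Adj u q <;> by_cases G.Adj v q <;>
    simp [*, hpu.symm, hpv.symm, hqu.symm, hqv.symm, huv.ne.symm]

lemma pivot_adjMatrix [DecidableEq V] [DecidableRel G.Adj] (huv : G.Adj u v) {p q : V}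
    (hpu : p ≠ u) (hpv : p ≠ v) (hqu : q ≠ u) (hqv : q ≠ v) :
    (pivot G u v).adjMatrix (ZMod 2) p q = G.adjMatrix (ZMod 2) p q +
      G.adjMatrix (ZMod 2) u p * G.adjMatrix (ZMod 2) v q +
      G.adjMatrix (ZMod 2) v p * G.adjMatrix (ZMod 2) u q := by
  have hpq := pivot_adj huv hpu hpv hqu hqv
  simp only [SimpleGraph.adjMatrix_apply]
  by_cases p = q <;> by_cases G.Adj p q <;> by_cases G.Adj u p <;> by_cases G.Adj v p <;>
    by_cases G.Adj u q <;> by_cases G.Adj v q <;> simp_all [Xor] <;> decide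

lemma pivot_neighborFinset_left_inter [Fintype V] [DecidableEq V] [DecidableRel G.Adj]
    (huv : G.Adj u v) {S : Finset V} (hu : u ∉ S) (hv : v ∉ S) :
    (pivot G u v).neighborFinset u ∩ S = G.neighborFinset v ∩ S := by
  ext p
  simp only [mem_inter, SimpleGraph.mem_neighborFinset, and_congr_left_iff]
  exact fun hp => pivot_adj_left huv (ne_of_mem_of_not_mem hp hu) (ne_of_mem_of_not_mem hp hv)

lemma pivot_neighborFinset_right_inter [Fintype V] [DecidableEq V] [DecidableRel G.Adj]
    (huv : G.Adj u v) {S : Finset V} (hu : u ∉ S) (hv : v ∉ S) :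
    (pivot G u v).neighborFinset v ∩ S = G.neighborFinset u ∩ S := by
  ext p
  simp only [mem_inter, SimpleGraph.mem_neighborFinset, and_congr_left_iff]
  exact fun hp => pivot_adj_right huv (ne_of_mem_of_not_mem hp hu) (ne_of_mem_of_not_mem hp hv)

end Pivot

section BitString

variable {V : Type*} [DecidableEq V]

def bitsOf (S : Finset V) : V → Bool := fun p => decide (p ∈ S)

lemma update_bitsOf_true (S : Finset V) (w : V) :
    update (bitsOf S) w true = bitsOf (insert w S) := by
  funext p; by_cases hp : p = w <;> simp [bitsOf, hp]

lemma update_bitsOf_false (S : Finset V) (w : V) :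
    update (bitsOf S) w false = bitsOf (S.erase w) := by
  funext p; by_cases hp : p = w <;> simp [bitsOf, hp]

lemma exists_eq_update_update_bitsOf [Fintype V] (x : V → Bool) (u v : V) :
    ∃ (S : Finset V) (a b : Bool), u ∉ S ∧ v ∉ S ∧ x = update (update (bitsOf S) u a) v b := by
  refine ⟨({p | x p ∧ p ≠ u ∧ p ≠ v} : Finset V), x u, x v, by simp, by simp, ?_⟩
  funext p
  by_cases hpv : p = v <;> by_cases hpu : p = u <;> simp_all [bitsOf]

end BitString

section GraphState

variable {V : Type*} [Fintype V] [DecidableEq V]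

lemma qVal_bitsOf (H : SimpleGraph V) [DecidableRel H.Adj] (S : Finset V) :
    qVal H (bitsOf S) = #(S.sym2.filter (· ∈ H.edgeSet)) := by
  unfold qVal
  congr 1
  ext e
  simp [bitsOf, and_comm]

lemma qVal_bitsOf_empty (H : SimpleGraph V) [DecidableRel H.Adj] : qVal H (bitsOf ∅) = 0 := by
  simp [qVal_bitsOf]

lemma qVal_insert (H : SimpleGraph V) [DecidableRel H.Adj] {S : Finset V} {w : V} (hw : w ∉ S) :
    qVal H (bitsOf (insert w S)) = qVal H (bitsOf S) + #(H.neighborFinset w ∩ S) := by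
  have hnbr : (insert w S).filter (fun p => s(w, p) ∈ H.edgeSet) = H.neighborFinset w ∩ S := by
    ext p; by_cases hp : p = w <;> simp [hp, and_comm]
  rw [qVal_bitsOf, qVal_bitsOf, ← cons_eq_insert w S hw, sym2_cons, filter_disjUnion,
    card_disjUnion, filter_map, card_map, cons_eq_insert, add_comm, ← hnbr]
  rfl

lemma qVal_update_update (H : SimpleGraph V) [DecidableRel H.Adj] {u v : V} (huv : H.Adj u v)
    {S : Finset V} (hu : u ∉ S) (hv : v ∉ S) (c d : Bool) :
    qVal H (update (update (bitsOf S) u c) v d) = qVal H (bitsOf S) +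
      c.toNat * #(H.neighborFinset u ∩ S) + d.toNat * #(H.neighborFinset v ∩ S) +
      c.toNat * d.toNat := by
  have hv' : v ∉ insert u S := by simp [huv.ne.symm, hv]
  have hu' : u ∉ H.neighborFinset v ∩ S := by simp [hu]
  cases c <;> cases d <;>
    simp only [update_bitsOf_true, update_bitsOf_false, erase_eq_of_notMem hu,
      erase_eq_of_notMem hv, erase_eq_of_notMem hv', qVal_insert H hu, qVal_insert H hv,
      qVal_insert H hv', inter_insert_of_mem (H.mem_neighborFinset v u |>.2 huv.symm),
      card_insert_of_notMem hu', Bool.toNat_false, Bool.toNat_true] <;> ring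

lemma graphState_update_update (H : SimpleGraph V) [DecidableRel H.Adj] {u v : V}
    (huv : H.Adj u v) {S : Finset V} (hu : u ∉ S) (hv : v ∉ S) (c d : Bool) :
    graphState H (update (update (bitsOf S) u c) v d) = graphState H (bitsOf S) *
      (-1) ^ (c.toNat * #(H.neighborFinset u ∩ S) + d.toNat * #(H.neighborFinset v ∩ S) +
        c.toNat * d.toNat) := by
  simp only [graphState, qVal_update_update H huv hu hv, pow_add]
  ring

end GraphState

section Parity

variable {V : Type*} [Fintype V] [DecidableEq V]

lemma natCast_card_neighborFinset_inter {R : Type*} [Semiring R] (H : SimpleGraph V)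
    [DecidableRel H.Adj] (w : V) (S : Finset V) :
    (#(H.neighborFinset w ∩ S) : R) = ∑ p ∈ S, H.adjMatrix R w p := by
  rw [inter_comm, ← filter_mem_eq_inter, natCast_card_filter]
  simp only [SimpleGraph.mem_neighborFinset, SimpleGraph.adjMatrix_apply]

lemma natCast_card_neighborFinset_inter_inter {R : Type*} [Semiring R] (H : SimpleGraph V)
    [DecidableRel H.Adj] (u v : V) (S : Finset V) :
    (#(H.neighborFinset u ∩ H.neighborFinset v ∩ S) : R) =
      ∑ p ∈ S, H.adjMatrix R u p * H.adjMatrix R v p := by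
  rw [inter_comm, ← filter_mem_eq_inter, natCast_card_filter]
  simp only [mem_inter, SimpleGraph.mem_neighborFinset, SimpleGraph.adjMatrix_apply,
    ite_zero_mul_ite_zero, mul_one]

lemma qVal_pivot {G : SimpleGraph V} [DecidableRel G.Adj] {u v : V} (huv : G.Adj u v)
    {S : Finset V} (hu : u ∉ S) (hv : v ∉ S) :
    (qVal (pivot G u v) (bitsOf S) : ZMod 2) = qVal G (bitsOf S) +
      #(G.neighborFinset u ∩ S) * #(G.neighborFinset v ∩ S) +
      #(G.neighborFinset u ∩ G.neighborFinset v ∩ S) := by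
  induction S using Finset.induction_on with
  | empty => simp [qVal_bitsOf_empty]
  | insert w S hwS ih =>
    simp only [mem_insert, not_or] at hu hv
    have hS : ∀ p ∈ S, p ≠ u ∧ p ≠ v := fun p hp =>
      ⟨ne_of_mem_of_not_mem hp hu.2, ne_of_mem_of_not_mem hp hv.2⟩
    rw [qVal_insert _ hwS, qVal_insert _ hwS]
    push_cast
    rw [ih hu.2 hv.2]
    simp only [natCast_card_neighborFinset_inter, natCast_card_neighborFinset_inter_inter,
      sum_insert hwS]
    rw [sum_congr rfl fun p hp =>
      pivot_adjMatrix huv (Ne.symm hu.1) (Ne.symm hv.1) (hS p hp).1 (hS p hp).2]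
    simp only [sum_add_distrib, ← mul_sum]
    -- the two contributions `[u ~ w][v ~ w]` cancel in characteristic 2
    have h2 : (2 : ZMod 2) = 0 := rfl
    linear_combination (-(G.adjMatrix (ZMod 2) u w * G.adjMatrix (ZMod 2) v w)) * h2

lemma neg_one_pow_eq_of_natCast_eq {R : Type*} [Monoid R] [HasDistribNeg R] {m n : ℕ}
    (h : (m : ZMod 2) = n) : (-1 : R) ^ m = (-1) ^ n :=
  neg_one_pow_congr (by rw [← ZMod.natCast_eq_zero_iff_even, ← ZMod.natCast_eq_zero_iff_even, h])

end Parity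

section Hadamard

variable {V : Type*} [DecidableEq V] {u v : V}

lemma two_mul_neg_one_pow_mul {R : Type*} [CommRing R] (m n : ℕ) :
    2 * (-1 : R) ^ (m * n) = 1 + (-1) ^ m + (-1) ^ n - (-1) ^ (m + n) := by
  rcases Nat.even_or_odd m with hm | hm <;> rcases Nat.even_or_odd n with hn | hn <;>
    simp [pow_add, pow_mul, hm.neg_one_pow, hn.neg_one_pow] <;> ring

lemma Hop_Hop_update_update (huv : u ≠ v) (ψ : QState V) (y : V → Bool) (κ : ℂ) (α β : ℕ)
    (hψ : ∀ c d : Bool, ψ (update (update y u c) v d) =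
      κ * (-1) ^ (c.toNat * α + d.toNat * β + c.toNat * d.toNat)) (a b : Bool) :
    Hop u (Hop v ψ) (update (update y u a) v b) = κ * (-1) ^ ((a.toNat + α) * (b.toNat + β)) := by
  have hupd : ∀ c d, update (update (update (update y u a) v b) u c) v d =
      update (update y u c) v d := fun c d => by rw [update_comm huv.symm, update_idem, update_idem]
  have hsign : ∀ c : Bool, (if c = true then (-1 : ℂ) else 1) = (-1) ^ c.toNat := by
    intro c; cases c <;> simp
  have hsqrt : ((Real.sqrt 2 : ℝ) : ℂ)⁻¹ * ((Real.sqrt 2 : ℝ) : ℂ)⁻¹ = 2⁻¹ := by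
    rw [← mul_inv, ← Complex.ofReal_mul, Real.mul_self_sqrt zero_le_two, Complex.ofReal_ofNat]
  have hcz := two_mul_neg_one_pow_mul (R := ℂ) (a.toNat + α) (b.toNat + β)
  simp only [Hop, hupd, hψ, hsign, update_self, update_of_ne huv.symm, update_of_ne huv,
    Bool.toNat_false, Bool.toNat_true, zero_mul, one_mul, mul_one, add_zero, zero_add, pow_zero]
  simp only [pow_add, pow_one] at hcz ⊢
  linear_combination (-κ / 2) * hcz + κ * (1 + (-1) ^ a.toNat * (-1) ^ α + (-1) ^ b.toNat * (-1) ^ β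
      - (-1) ^ a.toNat * (-1) ^ α * ((-1) ^ b.toNat * (-1) ^ β)) * hsqrt

end Hadamard

/-- For any edge `uv` of `G`: `H_u H_v |G⟩ = Z_{N(u)∩N(v)} |G∧uv⟩`. -/
theorem hadamard_pivot_graphState {V : Type} [Fintype V] [DecidableEq V]
    (G : SimpleGraph V) [DecidableRel G.Adj] (u v : V) (huv : G.Adj u v) :
    Hop u (Hop v (graphState G)) =
      Zop (G.neighborFinset u ∩ G.neighborFinset v) (graphState (pivot G u v)) := by
  funext x
  obtain ⟨S, a, b, hu, hv, rfl⟩ := exists_eq_update_update_bitsOf x u v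
  have hcommon : (G.neighborFinset u ∩ G.neighborFinset v).filter
      (fun p => update (update (bitsOf S) u a) v b p = true) =
      G.neighborFinset u ∩ G.neighborFinset v ∩ S := by
    ext p
    by_cases hpu : p = u <;> by_cases hpv : p = v <;> simp_all [bitsOf, and_assoc]
  rw [Hop_Hop_update_update huv.ne _ _ _ _ _ (graphState_update_update G huv hu hv), Zop,
    hcommon, graphState_update_update _ (pivot_adj_self huv) hu hv,
    pivot_neighborFinset_left_inter huv hu hv, pivot_neighborFinset_right_inter huv hu hv]
  simp only [graphState, div_mul_eq_mul_div, mul_div_assoc', ← pow_add]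
  congr 1
  refine neg_one_pow_eq_of_natCast_eq ?_
  push_cast
  rw [qVal_pivot huv hu hv]
  have h2 : (2 : ZMod 2) = 0 := rfl
  linear_combination (-(#(G.neighborFinset u ∩ G.neighborFinset v ∩ S) : ZMod 2)) * h2
end

section
/- Let n ≥ 2, let P_n be the path graph on vertices 1,…,n, and consider the open graph (P_n,{1},{n}) where qubits 1,…,n−1 are X-measured. For every outcome vector (r₁,…,r_{n−1}) ∈ {0,1}^{n−1} there exist a,b ∈ {0,1} and a scalar λ with |λ|=1 such that for every x ∈ {0,1}: 2^{(n−1)/2} · ⟨r₁^{(π/2)}|_1 ⋯ ⟨r_{n−1}^{(π/2)}|_{n−1} M_{(P_n,{1},{n})}|x⟩ = λ · X^a Z^b H^{n−1} |x⟩ (a state of qubit n). In particular, up to a Pauli correction, the computation simulates the Hadamard gate H when n is even and the identity when n is odd; for n=2 one has exactly √2 · ⟨r^{(π/2)}|_1 M_{(P_2,{1},{2})}|x⟩ = X^r H |x⟩. -/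
noncomputable section

variable {V : Type*} [Fintype V] [DecidableEq V]

/-- The path graph `P_n` on `Fin n` (vertices `0,…,n−1` standing for `1,…,n`). -/
def pathG (n : ℕ) : SimpleGraph (Fin n) :=
  SimpleGraph.fromRel (fun a b => (b : ℕ) = (a : ℕ) + 1)

instance (n : ℕ) : DecidableRel (pathG n).Adj :=
  fun a b => inferInstanceAs
    (Decidable (a ≠ b ∧ ((b : ℕ) = (a : ℕ) + 1 ∨ (a : ℕ) = (b : ℕ) + 1)))

/-- The entangling operator `M_{(G,I,O)}` of an open graph `(G,I,O)` applied to the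
computational basis input `|x⟩`, `x ∈ {0,1}^I`:
`M_{(G,I,O)} |x⟩ = 2^{−|I|/2} ∑_{S⊆I} (−1)^{x•1_S} |G;S⟩`
(it does not depend on the output set `O`). -/
def MGIO (G : SimpleGraph V) [DecidableRel G.Adj] (I : Finset V)
    (x : {v : V // v ∈ I} → Bool) : QState V :=
  fun z => (Real.sqrt (2 ^ I.card) : ℂ)⁻¹ *
    ∑ S ∈ I.powerset,
      (-1 : ℂ) ^ (I.attach.filter (fun u => x u = true ∧ u.1 ∈ S)).card * sgState G S z

/-- The X-measurement bra `⟨r^{(π/2)}|`: `|0^{(π/2)}⟩ = (|0⟩+|1⟩)/√2`,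
`|1^{(π/2)}⟩ = (|0⟩−|1⟩)/√2`. -/
def xVec (s : Bool) : Bool → ℂ :=
  fun b => if s && b then -(Real.sqrt 2 : ℂ)⁻¹ else (Real.sqrt 2 : ℂ)⁻¹

/-- Partial inner product of `ψ` with the product bra `⊗_{u∈M} ⟨β_u|_u`, yielding an
(unnormalized) state on the unmeasured qubits `V∖M`. -/
def contractM (M : Finset V) (β : V → Bool → ℂ) (ψ : QState V) :
    QState {v : V // v ∉ M} :=
  fun x => ∑ y : V → Bool,
    if (∀ v : {v : V // v ∉ M}, y v.1 = x v) then
      (∏ u ∈ M, starRingEnd ℂ (β u (y u))) * ψ y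
    else 0

/-- The single-qubit Pauli `X` matrix. -/
def Xm : Matrix (Fin 2) (Fin 2) ℂ := !![0, 1; 1, 0]

/-- The single-qubit Pauli `Z` matrix. -/
def Zm : Matrix (Fin 2) (Fin 2) ℂ := !![1, 0; 0, -1]

/-- The Hadamard matrix. -/
def Hmat : Matrix (Fin 2) (Fin 2) ℂ := (Real.sqrt 2 : ℂ)⁻¹ • !![1, 1; 1, -1]

/-- Index computational basis values `Bool` by `Fin 2`. -/
def b2 (b : Bool) : Fin 2 := if b then 1 else 0

end

/-! Contracting the graph state of the path with the input projector `⟨x|₁` and the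
X-measurement bras leaves, for each edge `{i, i+1}`, a local factor
`(-1)^{r_i z_i} (-1)^{z_i z_{i+1}} / √2 = (H Z^{r_i})(z_{i+1}, z_i)`, so the amplitude is an entry
of the transfer-matrix product `H Z^{r_{n-1}} ⋯ H Z^{r_1}`. Since `H Z = X H` and `H X = Z H`,
the Pauli factors can be pushed to the left one at a time, leaving `± X^a Z^b H^{n-1}`. -/

open Finset Matrix

/-- The matrices are multiplied in the order `W (k-1) * ⋯ * W 0`: `W i` carries vertex `i` of the
path to vertex `i + 1`. -/
theorem sum_path_prod_mul_eq_list_prod_mulVec {R α : Type*} [CommSemiring R] [Fintype α]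
    [DecidableEq α] :
    ∀ (k : ℕ) (W : Fin k → Matrix α α R) (h : α → R) (c : α),
      ∑ y : Fin (k + 1) → α,
        (if y (Fin.last k) = c then (∏ i, W i (y i.succ) (y i.castSucc)) * h (y 0) else 0) =
      ((List.ofFn W).reverse.prod *ᵥ h) c
  | 0, W, h, c => by
    rw [← (Equiv.funUnique (Fin 1) α).symm.sum_comp]
    simp
  | k + 1, W, h, c => by
    rw [← (Fin.consEquiv fun _ => α).sum_comp, Fintype.sum_prod_type, sum_comm, List.ofFn_succ,
      List.reverse_cons, List.prod_append, List.prod_singleton, ← mulVec_mulVec,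
      ← sum_path_prod_mul_eq_list_prod_mulVec k (fun i => W i.succ) (W 0 *ᵥ h) c]
    refine sum_congr rfl fun y _ => ?_
    simp only [Fin.consEquiv_apply, Fin.prod_univ_succ, Fin.cons_zero, Fin.cons_succ,
      ← Fin.succ_last, ← Fin.succ_castSucc, mulVec, dotProduct]
    split_ifs
    · simp only [Fin.castSucc_zero, Fin.cons_zero, sum_mul, mul_comm, mul_assoc]
    · exact sum_const_zero

theorem Hmat_mul_Zm : Hmat * Zm = Xm * Hmat := by
  ext i j
  fin_cases i <;> fin_cases j <;> simp [Hmat, Xm, Zm, Matrix.mul_apply, Fin.sum_univ_two]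

theorem Hmat_mul_Zm_pow_mul_pauli (t a b : Bool) :
    Hmat * Zm ^ (if t then 1 else 0) * (Xm ^ (if a then 1 else 0) * Zm ^ (if b then 1 else 0)) =
      (if a && b then -1 else 1 : ℂ) •
        (Xm ^ (if xor t b then 1 else 0) * Zm ^ (if a then 1 else 0) * Hmat) := by
  ext i j
  cases t <;> cases a <;> cases b <;> fin_cases i <;> fin_cases j <;>
    simp [Hmat, Xm, Zm, Matrix.mul_apply, Fin.sum_univ_two]

theorem exists_prod_Hmat_mul_Zm_pow_eq_smul_pauli_mul_Hmat_pow :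
    ∀ (k : ℕ) (t : Fin k → Bool), ∃ (a b : Bool) (ε : ℂ), ‖ε‖ = 1 ∧
      (List.ofFn fun i => Hmat * Zm ^ (if t i then 1 else 0)).reverse.prod =
        ε • (Xm ^ (if a then 1 else 0) * Zm ^ (if b then 1 else 0) * Hmat ^ k)
  | 0, _ => ⟨false, false, 1, by simp⟩
  | k + 1, t => by
    obtain ⟨a, b, ε, hε, hprod⟩ :=
      exists_prod_Hmat_mul_Zm_pow_eq_smul_pauli_mul_Hmat_pow k fun i => t i.castSucc
    refine ⟨xor (t (Fin.last k)) b, a, ε * if a && b then -1 else 1, ?_, ?_⟩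
    · rw [norm_mul, hε, one_mul]
      split_ifs <;> simp
    · rw [List.ofFn_succ', List.concat_eq_append, List.reverse_concat', List.prod_cons, hprod,
        mul_smul_comm, ← mul_assoc, Hmat_mul_Zm_pow_mul_pauli, smul_mul_assoc, smul_smul,
        mul_assoc _ Hmat, ← pow_succ']

theorem pathG_adj_iff {n : ℕ} (u v : Fin n) :
    (pathG n).Adj u v ↔ (v : ℕ) = u + 1 ∨ (u : ℕ) = v + 1 := by
  rw [pathG, SimpleGraph.fromRel_adj, and_iff_right_iff_imp]
  rintro (h | h) rfl <;> omega

def pathEdge (k : ℕ) : Fin k ↪ Sym2 (Fin (k + 1)) :=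
  ⟨fun i => s(i.castSucc, i.succ), fun i j h => by
    simp only [Sym2.eq_iff, Fin.ext_iff, Fin.val_castSucc, Fin.val_succ] at h
    omega⟩

@[simp]
theorem pathEdge_apply (k : ℕ) (i : Fin k) : pathEdge k i = s(i.castSucc, i.succ) := rfl

theorem edgeFinset_pathG (k : ℕ) : (pathG (k + 1)).edgeFinset = univ.map (pathEdge k) := by
  ext e
  induction e using Sym2.ind with
  | _ u v =>
    simp only [SimpleGraph.mem_edgeFinset, SimpleGraph.mem_edgeSet, pathG_adj_iff, mem_map,
      mem_univ, true_and, pathEdge_apply, Sym2.eq_iff, Fin.ext_iff, Fin.val_castSucc, Fin.val_succ]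
    constructor
    · rintro (h | h)
      · exact ⟨⟨u, by omega⟩, Or.inl ⟨rfl, h.symm⟩⟩
      · exact ⟨⟨v, by omega⟩, Or.inr ⟨rfl, h.symm⟩⟩
    · rintro ⟨i, ⟨h₁, h₂⟩ | ⟨h₁, h₂⟩⟩ <;> omega

theorem neg_one_pow_qVal_pathG (k : ℕ) (z : Fin (k + 1) → Bool) :
    (-1 : ℂ) ^ qVal (pathG (k + 1)) z =
      ∏ i : Fin k, if z i.castSucc && z i.succ then -1 else 1 := by
  rw [qVal, card_filter, edgeFinset_pathG, sum_map, ← prod_pow_eq_pow_sum]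
  refine prod_congr rfl fun i _ => ?_
  simp only [pathEdge_apply, Sym2.mem_iff, forall_eq_or_imp, forall_eq, Bool.and_eq_true]
  split_ifs <;> simp

theorem MGIO_singleton_apply {V : Type*} [Fintype V] [DecidableEq V] (G : SimpleGraph V)
    [DecidableRel G.Adj] (v : V) (x : Bool) (z : V → Bool) :
    MGIO G {v} (fun _ => x) z = if z v = x then (Real.sqrt 2 : ℂ) * graphState G z else 0 := by
  have hsqrt : (Real.sqrt 2 : ℂ) ^ 2 = 2 := by
    rw [← Complex.ofReal_pow, Real.sq_sqrt zero_le_two, Complex.ofReal_ofNat]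
  have hpowerset : ({v} : Finset V).powerset = {∅, {v}} := by
    ext S
    simp [subset_singleton_iff]
  simp only [MGIO, sgState, Zop, hpowerset, card_singleton, pow_one]
  rw [sum_pair (singleton_ne_empty v).symm]
  cases x <;> cases hz : z v <;> simp [hz, filter_singleton] <;> field_simp <;> rw [hsqrt] <;> ring

theorem Hmat_mul_Zm_pow_apply (t b' b : Bool) :
    (Hmat * Zm ^ (if t then 1 else 0)) (b2 b') (b2 b) =
      (Real.sqrt 2 : ℂ)⁻¹ * (if t && b then -1 else 1) * (if b && b' then -1 else 1) := by
  cases t <;> cases b' <;> cases b <;>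
    simp [Hmat, Zm, b2, Matrix.mul_apply, Fin.sum_univ_two]

theorem reindex_finTwoEquiv_apply {R : Type*} (A : Matrix (Fin 2) (Fin 2) R) (b b' : Bool) :
    reindex finTwoEquiv finTwoEquiv A b b' = A (b2 b) (b2 b') := by
  cases b <;> cases b' <;> rfl

theorem conj_xVec (s b : Bool) :
    starRingEnd ℂ (xVec s b) = (Real.sqrt 2 : ℂ)⁻¹ * if s && b then -1 else 1 := by
  cases s <;> cases b <;> simp [xVec, Complex.conj_ofReal]

theorem prod_univ_erase_last {M : Type*} [CommMonoid M] (k : ℕ) (f : Fin (k + 1) → M) :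
    ∏ i ∈ univ.erase (Fin.last k), f i = ∏ i : Fin k, f i.castSucc := by
  rw [← compl_singleton, ← Fin.image_castSucc,
    prod_image fun i _ j _ h => Fin.castSucc_injective _ h]

theorem smul_contractM_MGIO_pathG (k : ℕ) (r : Fin (k + 1) → Bool) (x : Bool) :
    (Real.sqrt (2 ^ k) : ℂ) •
        contractM (univ.erase (Fin.last k)) (fun u => xVec (r u))
          (MGIO (pathG (k + 1)) {0} (fun _ => x)) =
      fun y => (List.ofFn fun i : Fin k => Hmat * Zm ^ (if r i.castSucc then 1 else 0)).reverse.prod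
        (b2 (y ⟨Fin.last k, notMem_erase _ _⟩)) (b2 x) := by
  funext y
  set c := y ⟨Fin.last k, notMem_erase _ _⟩
  set W : Fin k → Matrix Bool Bool ℂ := fun i =>
    reindex finTwoEquiv finTwoEquiv (Hmat * Zm ^ (if r i.castSucc then 1 else 0))
  have hfix : ∀ z : Fin (k + 1) → Bool,
      (∀ v : {v // v ∉ univ.erase (Fin.last k)}, z v = y v) ↔ z (Fin.last k) = c := by
    refine fun z => ⟨fun h => h ⟨Fin.last k, notMem_erase _ _⟩, fun h ⟨v, hv⟩ => ?_⟩
    obtain rfl : v = Fin.last k := by simpa using hv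
    exact h
  have hsummand : ∀ z : Fin (k + 1) → Bool,
      (if ∀ v : {v // v ∉ univ.erase (Fin.last k)}, z v = y v then
          (∏ u ∈ univ.erase (Fin.last k), starRingEnd ℂ (xVec (r u) (z u))) *
            MGIO (pathG (k + 1)) {0} (fun _ => x) z
        else 0) =
      (Real.sqrt 2 / Real.sqrt (2 ^ (k + 1)) : ℂ) *
        if z (Fin.last k) = c then
          (∏ i, W i (z i.succ) (z i.castSucc)) * (Pi.single x 1 : Bool → ℂ) (z 0) else 0 := by
    intro z
    rw [if_congr (hfix z) rfl rfl]
    split_ifs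
    · simp only [MGIO_singleton_apply, graphState, neg_one_pow_qVal_pathG, prod_univ_erase_last,
        W, reindex_finTwoEquiv_apply, Hmat_mul_Zm_pow_apply, conj_xVec, Pi.single_apply,
        prod_mul_distrib, Fintype.card_fin]
      split_ifs <;> ring
    · simp
  rw [Pi.smul_apply, contractM, smul_eq_mul, sum_congr rfl fun z _ => hsummand z, ← mul_sum,
    sum_path_prod_mul_eq_list_prod_mulVec, mulVec_single_one]
  have hW : (List.ofFn W).reverse.prod = reindex finTwoEquiv finTwoEquiv
      (List.ofFn fun i : Fin k => Hmat * Zm ^ (if r i.castSucc then 1 else 0)).reverse.prod := by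
    rw [← coe_reindexRingEquiv (R := ℂ), map_list_prod, List.map_reverse, List.map_ofFn]
    rfl
  have hscalar : (Real.sqrt (2 ^ k) : ℂ) * (Real.sqrt 2 / Real.sqrt (2 ^ (k + 1))) = 1 := by
    rw [pow_succ, Real.sqrt_mul (by positivity), Complex.ofReal_mul]
    field_simp
  rw [← mul_assoc, hscalar, one_mul, Matrix.col_apply, hW, reindex_finTwoEquiv_apply]

theorem path_open_graph_simulates_hadamard_general (n : ℕ)
    (first last : Fin n) (hfirst : (first : ℕ) = 0) (hlast : (last : ℕ) = n - 1)
    (M : Finset (Fin n)) (hM : M = Finset.univ.erase last) (hlM : last ∉ M) :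
    (∀ r : Fin n → Bool, ∃ (a b : Bool) (lam : ℂ), ‖lam‖ = 1 ∧
      ∀ x : Bool,
        (Real.sqrt (2 ^ (n - 1)) : ℂ) •
            contractM M (fun u => xVec (r u)) (MGIO (pathG n) {first} (fun _ => x)) =
          fun y : {v : Fin n // v ∉ M} → Bool =>
            lam * ((Xm ^ (if a then 1 else 0) * Zm ^ (if b then 1 else 0) * Hmat ^ (n - 1))
              (b2 (y ⟨last, hlM⟩)) (b2 x))) ∧
    (n = 2 → ∀ (r : Fin n → Bool) (x : Bool),
      (Real.sqrt 2 : ℂ) •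
          contractM M (fun u => xVec (r u)) (MGIO (pathG n) {first} (fun _ => x)) =
        fun y : {v : Fin n // v ∉ M} → Bool =>
          (Xm ^ (if r first then 1 else 0) * Hmat) (b2 (y ⟨last, hlM⟩)) (b2 x)) := by
  obtain ⟨k, rfl⟩ : ∃ k, n = k + 1 := ⟨n - 1, by omega⟩
  obtain rfl : first = 0 := Fin.ext hfirst
  obtain rfl : last = Fin.last k := Fin.ext hlast
  subst hM
  rw [Nat.add_sub_cancel]
  refine ⟨fun r => ?_, fun hk r x => ?_⟩
  · obtain ⟨a, b, ε, hε, hprod⟩ :=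
      exists_prod_Hmat_mul_Zm_pow_eq_smul_pauli_mul_Hmat_pow k fun i => r i.castSucc
    refine ⟨a, b, ε, hε, fun x => ?_⟩
    rw [smul_contractM_MGIO_pathG, hprod]
    rfl
  · obtain rfl : k = 1 := by omega
    simpa [Hmat_mul_Zm] using smul_contractM_MGIO_pathG 1 r x

/-- X-measuring the qubits `1,…,n−1` of the open graph `(P_n,{1},{n})` simulates, up to a
Pauli correction `X^a Z^b` and a phase, the unitary `H^{n−1}` (i.e. the Hadamard gate `H`
when `n` is even and the identity when `n` is odd): for every outcome vector `r` there are
`a, b ∈ {0,1}` and `λ` with `|λ| = 1` such that for every input `x ∈ {0,1}`,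
`2^{(n−1)/2} ⟨r₁^{(π/2)}|₁ ⋯ ⟨r_{n−1}^{(π/2)}|_{n−1} M_{(P_n,{1},{n})}|x⟩
  = λ · X^a Z^b H^{n−1} |x⟩` as a state of qubit `n`. Moreover for `n = 2` one has exactly
`√2 ⟨r^{(π/2)}|₁ M_{(P₂,{1},{2})}|x⟩ = X^r H |x⟩`. -/
theorem path_open_graph_simulates_hadamard (n : ℕ) (hn : 2 ≤ n)
    (first last : Fin n) (hfirst : (first : ℕ) = 0) (hlast : (last : ℕ) = n - 1)
    (M : Finset (Fin n)) (hM : M = Finset.univ.erase last) (hlM : last ∉ M) :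
    (∀ r : Fin n → Bool, ∃ (a b : Bool) (lam : ℂ), ‖lam‖ = 1 ∧
      ∀ x : Bool,
        (Real.sqrt (2 ^ (n - 1)) : ℂ) •
            contractM M (fun u => xVec (r u)) (MGIO (pathG n) {first} (fun _ => x)) =
          fun y : {v : Fin n // v ∉ M} → Bool =>
            lam * ((Xm ^ (if a then 1 else 0) * Zm ^ (if b then 1 else 0) * Hmat ^ (n - 1))
              (b2 (y ⟨last, hlM⟩)) (b2 x))) ∧
    (n = 2 → ∀ (r : Fin n → Bool) (x : Bool),
      (Real.sqrt 2 : ℂ) •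
          contractM M (fun u => xVec (r u)) (MGIO (pathG n) {first} (fun _ => x)) =
        fun y : {v : Fin n // v ∉ M} → Bool =>
          (Xm ^ (if r first then 1 else 0) * Hmat) (b2 (y ⟨last, hlM⟩)) (b2 x)) :=
  path_open_graph_simulates_hadamard_general n first last hfirst hlast M hM hlM
end
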